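/- arXiv:2203.03494 — 2 statements merged into one kernel-verified Lean document; each statement's English description precedes it below -/
import Mathlib

section
/- Let n ≥ 1 and let f, g ∈ ℝ[x₁,…,xₙ] be polynomials with non-negative coefficients such that f(x) = 1 and g(x) = 1 whenever x₁ + ⋯ + xₙ = 1. Suppose the constant coefficient of f is zero, f has total degree p ≥ 1 and the coefficient of x₁^p in f is positive, g has total degree d, and the coefficient c of x₁^d in g is positive. Define Wg = g + c·x₁^d·(f − 1). Then: Wg has non-negative coefficients; Wg(x) = 1 whenever x₁ + ⋯ + xₙ = 1; Wg has total degree d + p and the coefficient of x₁^{d+p} in Wg is positive; the support of Wg has cardinality equal to |support(g)| + |support(f)| − 1; and, for any integer q ≥ 1 and weights w ∈ ℕⁿ, if every α in the support of f and every α in the support of g satisfies q ∣ (w₁α₁ + ⋯ + wₙαₙ), then so does every α in the support of Wg. -/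
/-!
Write `c` for the coefficient of `X^s` in `g`, where `s = d e₁`. Then
`Wg = (g - c X^s) + c X^s f`. Since `f` has no constant term and `deg g ≤ |s|`, every
monomial `X^(s + γ)` of `X^s f` has degree above every monomial of `g`, so the two summands
have disjoint supports: the support of `Wg` is `supp g \ {s}` together with `s + supp f`.
Everything else follows from this decomposition; in particular the congruence conditions
survive because `s ∈ supp g` and they are closed under addition of exponents.
-/

open MvPolynomial

open scoped Finset

namespace MvPolynomial

variable {σ R : Type*}

section CommRing

variable [CommRing R] (s : σ →₀ ℕ)

theorem support_add_eq [DecidableEq σ] {p q : MvPolynomial σ R}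
    (h : Disjoint p.support q.support) : (p + q).support = p.support ∪ q.support :=
  Finsupp.support_add_eq h

/-- The operator `W` of the paper, with the monomial `x₁^d` generalised to `X^s`. -/
noncomputable def tensorAt (f g : MvPolynomial σ R) : MvPolynomial σ R :=
  g + monomial s (coeff s g) * (f - 1)

variable (f g : MvPolynomial σ R)

theorem tensorAt_eq_sub_add :
    tensorAt s f g = (g - monomial s (coeff s g)) + monomial s (coeff s g) * f := by
  unfold tensorAt
  ring

theorem coeff_sub_monomial_coeff [DecidableEq σ] (α : σ →₀ ℕ) :
    coeff α (g - monomial s (coeff s g)) = if α = s then 0 else coeff α g := by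
  rw [coeff_sub, coeff_monomial]
  by_cases h : α = s
  · subst h
    simp
  · simp [h, Ne.symm h]

theorem support_sub_monomial_coeff [DecidableEq σ] :
    (g - monomial s (coeff s g)).support = g.support.erase s := by
  ext α
  rw [mem_support_iff, coeff_sub_monomial_coeff, Finset.mem_erase, mem_support_iff]
  split_ifs with h <;> simp [h]

theorem support_monomial_mul_subset (c : R) :
    (monomial s c * f).support ⊆ f.support.map (addLeftEmbedding s) := by
  intro α hα
  rw [mem_support_iff, coeff_monomial_mul'] at hα
  split_ifs at hα with hs
  · exact Finset.mem_map.mpr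
      ⟨α - s, mem_support_iff.mpr (right_ne_zero_of_mul hα), add_tsub_cancel_of_le hs⟩
  · exact absurd rfl hα

theorem eval_tensorAt {x : σ → R} (hf : eval x f = 1) :
    eval x (tensorAt s f g) = eval x g := by
  simp [tensorAt, hf]

theorem support_tensorAt_subset_addSubmonoid {S : AddSubmonoid (σ →₀ ℕ)} (hs : s ∈ S)
    (hf : ∀ α ∈ f.support, α ∈ S) (hg : ∀ α ∈ g.support, α ∈ S) :
    ∀ α ∈ (tensorAt s f g).support, α ∈ S := by
  classical
  intro α hα
  rw [tensorAt_eq_sub_add] at hα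
  rcases Finset.mem_union.mp (support_add hα) with hα | hα
  · rw [support_sub_monomial_coeff] at hα
    exact hg α (Finset.mem_of_mem_erase hα)
  · obtain ⟨γ, hγ, rfl⟩ := Finset.mem_map.mp (support_monomial_mul_subset s f _ hα)
    exact S.add_mem hs (hf γ hγ)

theorem disjoint_support_map_addLeftEmbedding {f g : MvPolynomial σ R}
    (hg : g.totalDegree ≤ s.degree) (hf0 : coeff 0 f = 0) :
    Disjoint g.support (f.support.map (addLeftEmbedding s)) := by
  rw [Finset.disjoint_right]
  intro α hα hαg
  obtain ⟨γ, hγ, rfl⟩ := Finset.mem_map.mp hα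
  have hγ0 : γ ≠ 0 := by
    rintro rfl
    exact mem_support_iff.mp hγ hf0
  have hγdeg : 0 < γ.degree := Nat.pos_of_ne_zero ((Finsupp.degree_eq_zero_iff γ).not.mpr hγ0)
  have : (s + γ).degree ≤ s.degree := (le_totalDegree hαg).trans hg
  rw [map_add] at this
  omega

end CommRing

section Ordered

variable [CommRing R] [PartialOrder R] (s : σ →₀ ℕ) {f g : MvPolynomial σ R}

theorem coeff_tensorAt_nonneg [IsOrderedRing R] (hf : ∀ α, 0 ≤ coeff α f)
    (hg : ∀ α, 0 ≤ coeff α g) (α : σ →₀ ℕ) : 0 ≤ coeff α (tensorAt s f g) := by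
  classical
  rw [tensorAt_eq_sub_add, coeff_add, coeff_sub_monomial_coeff, coeff_monomial_mul']
  apply add_nonneg
  · split_ifs
    exacts [le_rfl, hg α]
  · split_ifs
    exacts [mul_nonneg (hg s) (hf _), le_rfl]

theorem coeff_add_tensorAt_pos [IsStrictOrderedRing R] (hg : ∀ α, 0 ≤ coeff α g)
    (hc : 0 < coeff s g) {γ : σ →₀ ℕ} (hγ : 0 < coeff γ f) :
    0 < coeff (s + γ) (tensorAt s f g) := by
  classical
  rw [tensorAt_eq_sub_add, coeff_add, coeff_sub_monomial_coeff, coeff_monomial_mul]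
  refine add_pos_of_nonneg_of_pos ?_ (mul_pos hc hγ)
  split_ifs
  exacts [le_rfl, hg _]

end Ordered

section Domain

variable [CommRing R] [IsDomain R] (s : σ →₀ ℕ) {f g : MvPolynomial σ R}

theorem support_monomial_mul {c : R} (hc : c ≠ 0) :
    (monomial s c * f).support = f.support.map (addLeftEmbedding s) := by
  refine (support_monomial_mul_subset s f c).antisymm fun α hα => ?_
  obtain ⟨γ, hγ, rfl⟩ := Finset.mem_map.mp hα
  rw [mem_support_iff, addLeftEmbedding_apply, coeff_monomial_mul]
  exact mul_ne_zero hc (mem_support_iff.mp hγ)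

theorem support_tensorAt [DecidableEq σ] (hg : g.totalDegree ≤ s.degree) (hf0 : coeff 0 f = 0)
    (hc : coeff s g ≠ 0) :
    (tensorAt s f g).support = g.support.erase s ∪ f.support.map (addLeftEmbedding s) := by
  have hdisj := Finset.disjoint_of_subset_left (Finset.erase_subset s g.support)
    (disjoint_support_map_addLeftEmbedding s hg hf0)
  rw [← support_sub_monomial_coeff, ← support_monomial_mul s hc] at hdisj
  rw [tensorAt_eq_sub_add, support_add_eq hdisj, support_sub_monomial_coeff,
    support_monomial_mul s hc]

theorem card_support_tensorAt (hg : g.totalDegree ≤ s.degree) (hf0 : coeff 0 f = 0)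
    (hc : coeff s g ≠ 0) :
    #(tensorAt s f g).support = #g.support + #f.support - 1 := by
  classical
  have hs : s ∈ g.support := mem_support_iff.mpr hc
  rw [support_tensorAt s hg hf0 hc, Finset.card_union_of_disjoint
    (Finset.disjoint_of_subset_left (Finset.erase_subset _ _)
      (disjoint_support_map_addLeftEmbedding s hg hf0)),
    Finset.card_erase_of_mem hs, Finset.card_map]
  have := Finset.card_pos.mpr ⟨s, hs⟩
  omega

theorem totalDegree_tensorAt (hg : g.totalDegree ≤ s.degree) (hc : coeff s g ≠ 0)
    (hf : 0 < f.totalDegree) :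
    (tensorAt s f g).totalDegree = s.degree + f.totalDegree := by
  classical
  have hf0 : f ≠ 0 := by
    rintro rfl
    simp at hf
  have hmul : (monomial s (coeff s g) * f).totalDegree = s.degree + f.totalDegree := by
    rw [totalDegree_mul_of_isDomain ((monomial_eq_zero).not.mpr hc) hf0,
      totalDegree_monomial s hc]
    rfl
  rw [tensorAt_eq_sub_add, totalDegree_add_eq_right_of_totalDegree_lt, hmul]
  calc (g - monomial s (coeff s g)).totalDegree
      ≤ g.totalDegree := totalDegree_le_of_support_subset <| by
        rw [support_sub_monomial_coeff]
        exact Finset.erase_subset _ _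
    _ ≤ s.degree := hg
    _ < _ := by omega

end Domain

def weightedMultiples [Fintype σ] (q : ℕ) (w : σ → ℕ) : AddSubmonoid (σ →₀ ℕ) where
  carrier := {α | q ∣ ∑ i, w i * α i}
  add_mem' {α β} (hα : q ∣ _) (hβ : q ∣ _) := by
    change q ∣ ∑ i, w i * (α + β) i
    simpa only [Finsupp.add_apply, mul_add, Finset.sum_add_distrib] using dvd_add hα hβ
  zero_mem' := by simp

end MvPolynomial

/-- The tensoring operator `W` from the proof of Theorem 1:
`Wg = g + c·x₁^d·(f − 1)` has non-negative coefficients, equals `1` on the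
hyperplane, has total degree `d + p` with positive pure coefficient of `x₁^{d+p}`,
its rank is `rank(g) + rank(f) − 1`, and it preserves weighted-congruence conditions
on the support. -/
theorem stmt_5 (n : ℕ) (hn : 1 ≤ n) (f g : MvPolynomial (Fin n) ℝ) (p d : ℕ) (hp : 1 ≤ p)
    (hfnn : ∀ α, 0 ≤ f.coeff α) (hgnn : ∀ α, 0 ≤ g.coeff α)
    (hf1 : ∀ x : Fin n → ℝ, (∑ i, x i) = 1 → eval x f = 1)
    (hg1 : ∀ x : Fin n → ℝ, (∑ i, x i) = 1 → eval x g = 1)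
    (hf0 : f.coeff 0 = 0)
    (hfdeg : f.totalDegree = p)
    (hfpure : 0 < f.coeff (Finsupp.single ⟨0, hn⟩ p))
    (hgdeg : g.totalDegree = d)
    (hgpure : 0 < g.coeff (Finsupp.single ⟨0, hn⟩ d)) :
    letI c : ℝ := g.coeff (Finsupp.single ⟨0, hn⟩ d)
    letI Wg : MvPolynomial (Fin n) ℝ := g + C c * (X ⟨0, hn⟩) ^ d * (f - 1)
    (∀ α, 0 ≤ Wg.coeff α) ∧
    (∀ x : Fin n → ℝ, (∑ i, x i) = 1 → eval x Wg = 1) ∧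
    Wg.totalDegree = d + p ∧
    0 < Wg.coeff (Finsupp.single ⟨0, hn⟩ (d + p)) ∧
    Wg.support.card = g.support.card + f.support.card - 1 ∧
    (∀ (q : ℕ) (w : Fin n → ℕ), 1 ≤ q →
      (∀ α ∈ f.support, q ∣ ∑ i, w i * α i) →
      (∀ α ∈ g.support, q ∣ ∑ i, w i * α i) →
      ∀ α ∈ Wg.support, q ∣ ∑ i, w i * α i) := by
  set s : Fin n →₀ ℕ := Finsupp.single ⟨0, hn⟩ d
  have hW : g + C (coeff s g) * X ⟨0, hn⟩ ^ d * (f - 1) = tensorAt s f g := by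
    rw [C_mul_X_pow_eq_monomial]
    rfl
  have hgs : g.totalDegree ≤ s.degree := by rw [Finsupp.degree_single, hgdeg]
  have hc : coeff s g ≠ 0 := hgpure.ne'
  rw [hW]
  refine ⟨coeff_tensorAt_nonneg s hfnn hgnn,
    fun x hx => (eval_tensorAt s f g (hf1 x hx)).trans (hg1 x hx), ?_, ?_,
    card_support_tensorAt s hgs hf0 hc, fun q w _ hf hg => ?_⟩
  · rw [totalDegree_tensorAt s hgs hc (by omega), Finsupp.degree_single, hfdeg]
  · rw [Finsupp.single_add]
    exact coeff_add_tensorAt_pos s hgnn hgpure hfpure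
  · exact support_tensorAt_subset_addSubmonoid (S := weightedMultiples q w) s f g
      (hg s (mem_support_iff.mpr hc)) hf hg
end

section
/- Let p ≥ 3 be an odd integer, let f_{p,2}(x,y) = x^p + Σ_{k=1}^{(p−1)/2} c_k x^{p−2k} y^k + y^p with c_k = (p/(p−k))·C(p−k, k), and define g₁(x,y) = f_{p,2}(x,y) + x^p·(f_{p,2}(x,y) − 1) ∈ ℝ[x,y]. Then g₁ has non-negative coefficients, g₁(x,y) = 1 whenever x + y = 1, every pair (a,b) in the support of g₁ satisfies p ∣ a + 2b, and the support of g₁ has exactly p + 2 elements. -/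
/-!
The Lucas polynomial `L_n = x^n + ∑ c_k x^(n-2k) y^k` equals `s^n + t^n` for the roots `s, t` of
`z² = x z + y`. On the line `x + y = 1` these roots are `1` and `-y`, so there
`f = L_p + y^p = 1 + (-y)^p + y^p = 1` because `p` is odd, and then `g₁ = 1` as well.
The roots are avoided through the Fibonacci polynomials `F_n = ∑ C(n-k,k) x^(n-2k) y^k`: they
satisfy `F_(n+2) = x F_(n+1) + y F_n`, hence `F_n = ∑_(i ≤ n) (-y)^i` on the line, and the
identity `c_k = C(n-k,k) + C(n-k-1,k-1)` gives `L_n = F_n + y F_(n-2)`.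

Expanding, `g₁` is the sum of `c_k x^(p-2k) y^k` and `c_k x^(2p-2k) y^k` for `1 ≤ k ≤ (p-1)/2`
together with `x^(2p)`, `y^p` and `x^p y^p`: these are `p + 2` distinct monomials with positive
coefficients, and `a + 2b ∈ {p, 2p, 3p}` for each of them.
-/

open MvPolynomial Finset

section Fibonacci
variable {R : Type*}

-- indexed by `(k, i)` with `k + i = n`, i.e. `∑ C(n-k,k) x^(n-2k) y^k`
def fibPoly [CommSemiring R] (x y : R) (n : ℕ) : R :=
  ∑ ki ∈ antidiagonal n, (ki.2.choose ki.1 : R) * x ^ (ki.2 - ki.1) * y ^ ki.1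

theorem fibPoly_add_two_eq_pow_add_sum [CommSemiring R] (x y : R) (n : ℕ) :
    fibPoly x y (n + 2) = x ^ (n + 2) + ∑ ki ∈ antidiagonal n,
      ((ki.2 + 1).choose (ki.1 + 1) : R) * x ^ (ki.2 - ki.1) * y ^ (ki.1 + 1) := by
  simp [fibPoly, Nat.antidiagonal_succ_succ']

theorem fibPoly_add_two [CommSemiring R] (x y : R) (n : ℕ) :
    fibPoly x y (n + 2) = x * fibPoly x y (n + 1) + y * fibPoly x y n := by
  have hx : x * fibPoly x y (n + 1) = x ^ (n + 2) + ∑ ki ∈ antidiagonal n,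
      (ki.2.choose (ki.1 + 1) : R) * x ^ (ki.2 - ki.1) * y ^ (ki.1 + 1) := by
    simp only [fibPoly, Nat.antidiagonal_succ, sum_cons, sum_map, mul_add, mul_sum]
    congr 1
    · simp [pow_succ']
    refine sum_congr rfl fun ki _ => ?_
    obtain ⟨k, i⟩ := ki
    rcases lt_or_ge i (k + 1) with h | h
    · simp [Nat.choose_eq_zero_of_lt h]
    · simp only [Function.Embedding.coe_prodMap, Function.Embedding.coeFn_mk, Prod.map_apply,
        Function.Embedding.refl_apply, Nat.succ_eq_add_one]
      rw [show i - k = i - (k + 1) + 1 by omega, pow_succ]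
      ring
  have hy : y * fibPoly x y n = ∑ ki ∈ antidiagonal n,
      (ki.2.choose ki.1 : R) * x ^ (ki.2 - ki.1) * y ^ (ki.1 + 1) := by
    simp only [fibPoly, mul_sum, pow_succ]
    exact sum_congr rfl fun _ _ => by ring
  rw [fibPoly_add_two_eq_pow_add_sum, hx, hy, add_assoc, ← sum_add_distrib]
  congr 1
  refine sum_congr rfl fun ki _ => ?_
  rw [Nat.choose_succ_succ', Nat.cast_add]
  ring

theorem fibPoly_eq_geom_sum [CommRing R] {x y : R} (h : x + y = 1) (n : ℕ) :
    fibPoly x y n = ∑ i ∈ range (n + 1), (-y) ^ i := by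
  induction n using Nat.twoStepInduction with
  | zero => simp [fibPoly]
  | one =>
    simp [fibPoly, Nat.antidiagonal_succ, sum_range_succ]
    linear_combination h
  | more n ih₀ ih₁ =>
    rw [fibPoly_add_two, ih₀, ih₁, sum_range_succ _ (n + 2), sum_range_succ _ (n + 1)]
    linear_combination (∑ i ∈ range (n + 1), (-y) ^ i + (-y) ^ (n + 1)) * h

theorem fibPoly_add_two_add_mul_fibPoly [CommRing R] {x y : R} (h : x + y = 1) (n : ℕ) :
    fibPoly x y (n + 2) + y * fibPoly x y n = 1 + (-y) ^ (n + 2) := by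
  rw [fibPoly_eq_geom_sum h, fibPoly_eq_geom_sum h, sum_range_succ _ (n + 2),
    sum_range_succ _ (n + 1)]
  linear_combination geom_sum_mul_neg (-y) (n + 1)

end Fibonacci

section Lucas
variable {K : Type*} [Field K]

variable (K) in
def lucasCoeff (n k : ℕ) : K := (n : K) / ((n : K) - (k : K)) * ((n - k).choose k : K)

theorem lucasCoeff_eq_zero {n k : ℕ} (h : n < 2 * k) : lucasCoeff K n k = 0 := by
  simp [lucasCoeff, Nat.choose_eq_zero_of_lt (show n - k < k by omega)]

theorem lucasCoeff_eq_choose_add_choose [CharZero K] (a k : ℕ) :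
    lucasCoeff K (a + k + 2) (k + 1) = ((a + 1).choose (k + 1) + a.choose k : ℕ) := by
  have hpascal : (a + k + 2) * (a + 1).choose (k + 1) =
      (a + 1) * ((a + 1).choose (k + 1) + a.choose k) := by
    have := Nat.add_one_mul_choose_eq a k
    rw [mul_add, this]
    ring
  have hsub : ((a + k + 2 : ℕ) : K) - ((k + 1 : ℕ) : K) = a + 1 := by push_cast; ring
  rw [lucasCoeff, hsub, show a + k + 2 - (k + 1) = a + 1 by omega,
    div_mul_eq_mul_div, div_eq_iff (Nat.cast_add_one_ne_zero a), ← Nat.cast_add_one a,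
    ← Nat.cast_mul, ← Nat.cast_mul, hpascal, mul_comm]

theorem lucasCoeff_pos [LinearOrder K] [IsStrictOrderedRing K] {n k : ℕ} (h : 2 * k < n) :
    0 < lucasCoeff K n k := by
  have hk : (k : K) < n := by exact_mod_cast (show k < n by omega)
  exact mul_pos (div_pos (by linarith [k.cast_nonneg (α := K)]) (by linarith))
    (by exact_mod_cast Nat.choose_pos (by omega))

def lucasPoly (x y : K) (n : ℕ) : K :=
  x ^ n + ∑ k ∈ Icc 1 (n / 2), lucasCoeff K n k * x ^ (n - 2 * k) * y ^ k

theorem lucasPoly_eq_fibPoly [CharZero K] (x y : K) (n : ℕ) :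
    lucasPoly x y (n + 2) = fibPoly x y (n + 2) + y * fibPoly x y n := by
  set g : ℕ → K := fun k => lucasCoeff K (n + 2) k * x ^ (n + 2 - 2 * k) * y ^ k
  have hshift : ∑ k ∈ Icc 1 ((n + 2) / 2), g k = ∑ ki ∈ antidiagonal n, g (ki.1 + 1) := by
    rw [← Ico_add_one_right_eq_Icc, sum_Ico_eq_sum_range,
      Nat.sum_antidiagonal_eq_sum_range_succ_mk]
    refine (sum_subset (range_subset_range.2 (by omega)) fun k hk hk' => ?_).trans
      (sum_congr rfl fun k _ => by rw [add_comm 1 k])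
    simp only [mem_range] at hk hk'
    simp [g, lucasCoeff_eq_zero (show n + 2 < 2 * (1 + k) by omega)]
  rw [lucasPoly, fibPoly_add_two_eq_pow_add_sum, hshift, fibPoly, mul_sum, add_assoc,
    ← sum_add_distrib]
  congr 1
  refine sum_congr rfl fun ki hki => ?_
  obtain ⟨k, i⟩ := ki
  rw [HasAntidiagonal.mem_antidiagonal] at hki
  subst hki
  simp only [g, show k + i + 2 = i + k + 2 by ring, lucasCoeff_eq_choose_add_choose,
    show i + k + 2 - 2 * (k + 1) = i - k by omega]
  push_cast
  ring

theorem lucasPoly_of_add_eq_one [CharZero K] {x y : K} (h : x + y = 1) {n : ℕ} (hn : 0 < n) :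
    lucasPoly x y n = 1 + (-y) ^ n := by
  obtain ⟨_ | q, rfl⟩ : ∃ q, n = q + 1 := ⟨n - 1, by omega⟩
  · simp [lucasPoly]
    linear_combination h
  · rw [lucasPoly_eq_fibPoly, fibPoly_add_two_add_mul_fibPoly h]

end Lucas

section Monomials
variable {R σ ι : Type*} [CommSemiring R]

theorem support_sum_monomial_of_injOn [DecidableEq σ] {s : Finset ι} {e : ι → σ →₀ ℕ}
    {a : ι → R} (he : Set.InjOn e s) (ha : ∀ i ∈ s, a i ≠ 0) :
    (∑ i ∈ s, monomial (e i) (a i)).support = s.image e := by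
  ext α
  simp only [mem_support_iff, coeff_sum, coeff_monomial, mem_image]
  constructor
  · intro h
    by_contra! hα
    exact h (sum_eq_zero fun i hi => if_neg (hα i hi))
  · rintro ⟨i, hi, rfl⟩
    rw [sum_eq_single_of_mem i hi fun j hj hji => if_neg fun h => hji (he hj hi h), if_pos rfl]
    exact ha i hi

theorem coeff_sum_monomial_nonneg [PartialOrder R] [IsOrderedAddMonoid R] {s : Finset ι}
    {e : ι → σ →₀ ℕ} {a : ι → R} (ha : ∀ i ∈ s, 0 ≤ a i) (α : σ →₀ ℕ) :
    0 ≤ coeff α (∑ i ∈ s, monomial (e i) (a i)) := by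
  classical
  rw [coeff_sum]
  refine sum_nonneg fun i hi => ?_
  rw [coeff_monomial]
  split_ifs
  exacts [ha i hi, le_rfl]

end Monomials

noncomputable def xyExp (ab : ℕ × ℕ) : Fin 2 →₀ ℕ :=
  Finsupp.single 0 ab.1 + Finsupp.single 1 ab.2

theorem xyExp_injective : Function.Injective xyExp := fun ab cd h =>
  Prod.ext (by simpa [xyExp] using congr($h 0)) (by simpa [xyExp] using congr($h 1))

theorem C_mul_X_pow_mul_X_pow_eq_monomial {R : Type*} [CommSemiring R] (r : R) (a b : ℕ) :
    C r * X 0 ^ a * X 1 ^ b = monomial (xyExp (a, b)) r := by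
  rw [X_pow_eq_monomial, X_pow_eq_monomial, C_mul_monomial, monomial_mul, mul_one, mul_one, xyExp]

def g₁Exponents (p : ℕ) : Finset (ℕ × ℕ) :=
  ((Icc 1 ((p - 1) / 2)).image fun k => (p - 2 * k, k)) ∪
    ((Icc 1 ((p - 1) / 2)).image fun k => (2 * p - 2 * k, k)) ∪ {(2 * p, 0), (0, p), (p, p)}

theorem sum_g₁Exponents {M : Type*} [AddCommMonoid M] {p : ℕ} (hp : 0 < p) (φ : ℕ × ℕ → M) :
    ∑ ab ∈ g₁Exponents p, φ ab = ∑ k ∈ Icc 1 ((p - 1) / 2), φ (p - 2 * k, k) +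
      ∑ k ∈ Icc 1 ((p - 1) / 2), φ (2 * p - 2 * k, k) +
        (φ (2 * p, 0) + (φ (0, p) + φ (p, p))) := by
  have hinj (c : ℕ) : Set.InjOn (fun k => (c - 2 * k, k)) (Icc 1 ((p - 1) / 2)) :=
    fun _ _ _ _ h => (Prod.ext_iff.1 h).2
  rw [g₁Exponents, sum_union, sum_union, sum_image (hinj p), sum_image (hinj (2 * p)), sum_insert,
    sum_insert, sum_singleton]
  all_goals simp [disjoint_left]
  all_goals omega

theorem card_g₁Exponents {p : ℕ} (hp : 0 < p) : #(g₁Exponents p) = 2 * ((p - 1) / 2) + 3 := by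
  rw [card_eq_sum_ones, sum_g₁Exponents hp]
  simp
  ring

theorem dvd_of_mem_g₁Exponents {p : ℕ} {ab : ℕ × ℕ} (h : ab ∈ g₁Exponents p) :
    p ∣ ab.1 + 2 * ab.2 := by
  simp only [g₁Exponents, mem_union, mem_image, mem_Icc, mem_insert, mem_singleton] at h
  rcases h with (⟨k, hk, rfl⟩ | ⟨k, hk, rfl⟩) | rfl | rfl | rfl
  exacts [⟨1, by omega⟩, ⟨2, by omega⟩, ⟨2, by omega⟩, ⟨2, by omega⟩, ⟨3, by omega⟩]

section CanonicalPoly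
variable (K : Type*) [Field K]

noncomputable def canonicalPoly (p : ℕ) : MvPolynomial (Fin 2) K :=
  X 0 ^ p + (∑ k ∈ Icc 1 ((p - 1) / 2), C (lucasCoeff K p k) * X 0 ^ (p - 2 * k) * X 1 ^ k) +
    X 1 ^ p

noncomputable def g₁ (p : ℕ) : MvPolynomial (Fin 2) K :=
  canonicalPoly K p + X 0 ^ p * (canonicalPoly K p - 1)

def g₁Coeff (p b : ℕ) : K := if b ∈ Icc 1 ((p - 1) / 2) then lucasCoeff K p b else 1

variable {K}

theorem eval_canonicalPoly [CharZero K] {p : ℕ} (hp : Odd p) {x y : K} (h : x + y = 1) :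
    eval ![x, y] (canonicalPoly K p) = 1 := by
  have hm : (p - 1) / 2 = p / 2 := by obtain ⟨m, rfl⟩ := hp; omega
  have hL := lucasPoly_of_add_eq_one h hp.pos
  rw [lucasPoly, ← hm] at hL
  simp [canonicalPoly, hL, hp.neg_pow]

theorem eval_g₁ [CharZero K] {p : ℕ} (hp : Odd p) {x y : K} (h : x + y = 1) :
    eval ![x, y] (g₁ K p) = 1 := by
  simp [g₁, eval_canonicalPoly hp h]

theorem g₁_eq_sum_monomial {p : ℕ} (hp : 0 < p) :
    g₁ K p = ∑ ab ∈ g₁Exponents p, monomial (xyExp ab) (g₁Coeff K p ab.2) := by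
  have hmon (c : ℕ) :
      ∑ k ∈ Icc 1 ((p - 1) / 2), monomial (xyExp (c - 2 * k, k)) (g₁Coeff K p k) =
      ∑ k ∈ Icc 1 ((p - 1) / 2), C (lucasCoeff K p k) * X 0 ^ (c - 2 * k) * X 1 ^ k :=
    sum_congr rfl fun k hk => by rw [g₁Coeff, if_pos hk, C_mul_X_pow_mul_X_pow_eq_monomial]
  have hshift : ∑ k ∈ Icc 1 ((p - 1) / 2),
      C (lucasCoeff K p k) * (X 0 : MvPolynomial (Fin 2) K) ^ (2 * p - 2 * k) * X 1 ^ k =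
      X 0 ^ p * ∑ k ∈ Icc 1 ((p - 1) / 2), C (lucasCoeff K p k) * X 0 ^ (p - 2 * k) * X 1 ^ k := by
    rw [mul_sum]
    refine sum_congr rfl fun k hk => ?_
    rw [mem_Icc] at hk
    rw [show 2 * p - 2 * k = p + (p - 2 * k) by omega, pow_add]
    ring
  rw [sum_g₁Exponents hp, hmon, hmon, hshift, g₁Coeff, g₁Coeff, if_neg (by simp),
    if_neg (by simp; omega), ← C_mul_X_pow_mul_X_pow_eq_monomial,
    ← C_mul_X_pow_mul_X_pow_eq_monomial, ← C_mul_X_pow_mul_X_pow_eq_monomial, g₁, canonicalPoly]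
  simp only [map_one, pow_zero, one_mul, mul_one]
  ring

end CanonicalPoly

section Ordered
variable {K : Type*} [Field K] [LinearOrder K] [IsStrictOrderedRing K]

theorem g₁Coeff_pos (p b : ℕ) : 0 < g₁Coeff K p b := by
  rw [g₁Coeff]
  split_ifs with hb
  · exact lucasCoeff_pos (by rw [mem_Icc] at hb; omega)
  · exact one_pos

theorem coeff_g₁_nonneg {p : ℕ} (hp : 0 < p) (α : Fin 2 →₀ ℕ) : 0 ≤ (g₁ K p).coeff α := by
  rw [g₁_eq_sum_monomial hp]
  exact coeff_sum_monomial_nonneg (fun ab _ => (g₁Coeff_pos p ab.2).le) α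

theorem support_g₁ {p : ℕ} (hp : 0 < p) : (g₁ K p).support = (g₁Exponents p).image xyExp := by
  rw [g₁_eq_sum_monomial hp]
  exact support_sum_monomial_of_injOn xyExp_injective.injOn fun ab _ => (g₁Coeff_pos p ab.2).ne'

theorem dvd_of_mem_support_g₁ {p : ℕ} (hp : 0 < p) {α : Fin 2 →₀ ℕ}
    (hα : α ∈ (g₁ K p).support) : p ∣ α 0 + 2 * α 1 := by
  rw [support_g₁ hp, mem_image] at hα
  obtain ⟨ab, hab, rfl⟩ := hα
  simpa [xyExp] using dvd_of_mem_g₁Exponents hab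

theorem card_support_g₁ {p : ℕ} (hp : Odd p) : #(g₁ K p).support = p + 2 := by
  rw [support_g₁ hp.pos, card_image_of_injective _ xyExp_injective, card_g₁Exponents hp.pos]
  obtain ⟨m, rfl⟩ := hp
  omega

end Ordered

theorem stmt_9_general (p : ℕ) (hodd : Odd p) :
    letI c : ℕ → ℝ := fun k => (p : ℝ) / ((p : ℝ) - (k : ℝ)) * ((p - k).choose k : ℝ)
    letI f : MvPolynomial (Fin 2) ℝ :=
      (X 0) ^ p + (∑ k ∈ Finset.Icc 1 ((p - 1) / 2),
        C (c k) * (X 0) ^ (p - 2 * k) * (X 1) ^ k) + (X 1) ^ p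
    letI g1 : MvPolynomial (Fin 2) ℝ := f + (X 0) ^ p * (f - 1)
    (∀ α, 0 ≤ g1.coeff α) ∧
    (∀ x y : ℝ, x + y = 1 → eval ![x, y] g1 = 1) ∧
    (∀ α ∈ g1.support, p ∣ α 0 + 2 * α 1) ∧
    g1.support.card = p + 2 :=
  ⟨coeff_g₁_nonneg hodd.pos, fun _ _ => eval_g₁ hodd,
    fun _ => dvd_of_mem_support_g₁ hodd.pos, card_support_g₁ hodd⟩

/-- With `f = f_{p,2}` the canonical `Γ(p,2)`-invariant polynomial, the polynomial
`g₁ = f + x^p·(f − 1)` has non-negative coefficients, equals `1` on `x + y = 1`,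
is `Γ(p,2)`-invariant (`p ∣ a + 2b` on its support), and has rank `p + 2`. -/
theorem stmt_9 (p : ℕ) (hp : 3 ≤ p) (hodd : Odd p) :
    letI c : ℕ → ℝ := fun k => (p : ℝ) / ((p : ℝ) - (k : ℝ)) * ((p - k).choose k : ℝ)
    letI f : MvPolynomial (Fin 2) ℝ :=
      (X 0) ^ p + (∑ k ∈ Finset.Icc 1 ((p - 1) / 2),
        C (c k) * (X 0) ^ (p - 2 * k) * (X 1) ^ k) + (X 1) ^ p
    letI g1 : MvPolynomial (Fin 2) ℝ := f + (X 0) ^ p * (f - 1)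
    (∀ α, 0 ≤ g1.coeff α) ∧
    (∀ x y : ℝ, x + y = 1 → eval ![x, y] g1 = 1) ∧
    (∀ α ∈ g1.support, p ∣ α 0 + 2 * α 1) ∧
    g1.support.card = p + 2 :=
  stmt_9_general p hodd
end
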